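/- Let M₀, M₁ be positive semidefinite 2×2 complex matrices with M₀ + M₁ = I. Define the four states ψ_{q,b} for q, b ∈ {0,1} by ψ_{0,0} = |0⟩, ψ_{0,1} = |1⟩, ψ_{1,0} = (|0⟩+|1⟩)/√2, ψ_{1,1} = (|0⟩−|1⟩)/√2. Then (1/4)·Σ_{q,b} ⟨ψ_{q,b}| M_b |ψ_{q,b}⟩ ≤ cos²(π/8). -/

import Mathlib

/-!
Substituting `M₁ = 1 - M₀`, the sum equals `2 + Re tr (M₀ (Z + X))`, where `Z, X` are the Pauli matrices
(the bases `q = 0, 1` contribute `Z` and `X` respectively). In the Breidbart basis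
`u = (cos π/8, sin π/8)`, `w = (-sin π/8, cos π/8)` one has `Z + X = √2 (|u⟩⟨u| - |w⟩⟨w|)`, so the
sum is `2 + √2 (⟨u, M₀ u⟩ - ⟨w, M₀ w⟩) ≤ 2 + √2` because `0 ≤ M₀ ≤ 1`; finally
`4 cos² (π/8) = 2 + √2`.
-/

open Matrix ComplexOrder

/-- The four BB84 states `H^q |b⟩` as vectors in `ℂ²`. -/
noncomputable def bb84 (q b : Fin 2) : Fin 2 → ℂ :=
  if q = 0 then
    (if b = 0 then ![1, 0] else ![0, 1])
  else
    (if b = 0 then ![(((Real.sqrt 2)⁻¹ : ℝ) : ℂ), (((Real.sqrt 2)⁻¹ : ℝ) : ℂ)]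
     else ![(((Real.sqrt 2)⁻¹ : ℝ) : ℂ), -(((Real.sqrt 2)⁻¹ : ℝ) : ℂ)])

open Real

section POVM

variable {n : Type*} [Fintype n]

lemma re_star_dotProduct_mulVec_nonneg {A : Matrix n n ℂ} (hA : A.PosSemidef) (v : n → ℂ) :
    0 ≤ (star v ⬝ᵥ A *ᵥ v).re :=
  (Complex.nonneg_iff.mp (hA.dotProduct_mulVec_nonneg v)).1

lemma re_star_dotProduct_mulVec_add_of_add_eq_one [DecidableEq n] {A B : Matrix n n ℂ}
    (h : A + B = 1) (v : n → ℂ) :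
    (star v ⬝ᵥ A *ᵥ v).re + (star v ⬝ᵥ B *ᵥ v).re = (star v ⬝ᵥ v).re := by
  rw [← Complex.add_re, ← dotProduct_add, ← add_mulVec, h, one_mulVec]

end POVM

def realVec2 (x y : ℝ) : Fin 2 → ℂ := ![x, y]

lemma re_star_realVec2_dotProduct_mulVec (N : Matrix (Fin 2) (Fin 2) ℂ) (x y : ℝ) :
    (star (realVec2 x y) ⬝ᵥ N *ᵥ realVec2 x y).re =
      x ^ 2 * (N 0 0).re + x * y * ((N 0 1).re + (N 1 0).re) + y ^ 2 * (N 1 1).re := by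
  simp [realVec2, dotProduct, mulVec, Fin.sum_univ_two, Complex.mul_re]
  ring

lemma star_realVec2_dotProduct_self (x y : ℝ) :
    star (realVec2 x y) ⬝ᵥ realVec2 x y = ((x ^ 2 + y ^ 2 : ℝ) : ℂ) := by
  simp [realVec2, dotProduct, Fin.sum_univ_two]
  ring

lemma bb84_zero_zero : bb84 0 0 = realVec2 1 0 := by simp [bb84, realVec2]

lemma bb84_zero_one : bb84 0 1 = realVec2 0 1 := by simp [bb84, realVec2]

lemma bb84_one_zero : bb84 1 0 = realVec2 (√2)⁻¹ (√2)⁻¹ := by simp [bb84, realVec2]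

lemma bb84_one_one : bb84 1 1 = realVec2 (√2)⁻¹ (-(√2)⁻¹) := by simp [bb84, realVec2]

lemma inv_sqrt_two_sq : (√2)⁻¹ ^ 2 = 1 / 2 := by
  rw [inv_pow, sq_sqrt zero_le_two, one_div]

lemma star_bb84_dotProduct_self : ∀ q b : Fin 2, star (bb84 q b) ⬝ᵥ bb84 q b = 1 := by
  simp only [Fin.forall_fin_two, bb84_zero_zero, bb84_zero_one, bb84_one_zero, bb84_one_one,
    star_realVec2_dotProduct_self, neg_sq, inv_sqrt_two_sq]
  norm_num

lemma sum_re_bb84_sub_eq (N : Matrix (Fin 2) (Fin 2) ℂ) :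
    ∑ q : Fin 2, ((star (bb84 q 0) ⬝ᵥ N *ᵥ bb84 q 0).re - (star (bb84 q 1) ⬝ᵥ N *ᵥ bb84 q 1).re)
      = √2 * ((star (realVec2 (cos (π / 8)) (sin (π / 8))) ⬝ᵥ
            N *ᵥ realVec2 (cos (π / 8)) (sin (π / 8))).re
          - (star (realVec2 (-sin (π / 8)) (cos (π / 8))) ⬝ᵥ
            N *ᵥ realVec2 (-sin (π / 8)) (cos (π / 8))).re) := by
  simp only [Fin.sum_univ_two, bb84_zero_zero, bb84_zero_one, bb84_one_zero, bb84_one_one,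
    re_star_realVec2_dotProduct_mulVec]
  have hcos : cos (π / 8) ^ 2 - sin (π / 8) ^ 2 = √2 / 2 := by
    rw [← cos_two_mul', ← cos_pi_div_four]; ring_nf
  have hsin : 2 * sin (π / 8) * cos (π / 8) = √2 / 2 := by
    rw [← sin_two_mul, ← sin_pi_div_four]; ring_nf
  have hsqrt : √2 ^ 2 = 2 := sq_sqrt zero_le_two
  linear_combination (-√2 * ((N 0 0).re - (N 1 1).re)) * hcos
    + (-√2 * ((N 0 1).re + (N 1 0).re)) * hsin + 2 * ((N 0 1).re + (N 1 0).re) * inv_sqrt_two_sq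
    - ((N 0 0).re - (N 1 1).re + (N 0 1).re + (N 1 0).re) / 2 * hsqrt

lemma cos_sq_pi_div_eight : cos (π / 8) ^ 2 = (2 + √2) / 4 := by
  rw [cos_pi_div_eight, div_pow, sq_sqrt (by positivity)]
  norm_num

theorem stmt_13 (M : Fin 2 → Matrix (Fin 2) (Fin 2) ℂ)
    (hM0 : (M 0).PosSemidef) (hM1 : (M 1).PosSemidef)
    (hsum : M 0 + M 1 = 1) :
    (1 / 4) * ∑ q : Fin 2, ∑ b : Fin 2,
        (star (bb84 q b) ⬝ᵥ (M b).mulVec (bb84 q b)).re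
      ≤ Real.cos (Real.pi / 8) ^ 2 := by
  have hpovm := re_star_dotProduct_mulVec_add_of_add_eq_one hsum
  set u := realVec2 (cos (π / 8)) (sin (π / 8))
  set w := realVec2 (-sin (π / 8)) (cos (π / 8))
  have hsuccess : ∑ q : Fin 2, ∑ b : Fin 2, (star (bb84 q b) ⬝ᵥ M b *ᵥ bb84 q b).re
      = 2 + √2 * ((star u ⬝ᵥ M 0 *ᵥ u).re - (star w ⬝ᵥ M 0 *ᵥ w).re) := by
    rw [← sum_re_bb84_sub_eq]
    have hcomplement (q : Fin 2) := hpovm (bb84 q 1)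
    simp only [star_bb84_dotProduct_self, Complex.one_re] at hcomplement
    simp only [Fin.sum_univ_two] at hcomplement ⊢
    linarith [hcomplement 0, hcomplement 1]
  have hu : (star u ⬝ᵥ M 0 *ᵥ u).re ≤ 1 := by
    have h := hpovm u
    rw [star_realVec2_dotProduct_self, cos_sq_add_sin_sq, Complex.ofReal_re] at h
    linarith [re_star_dotProduct_mulVec_nonneg hM1 u]
  have hw := re_star_dotProduct_mulVec_nonneg hM0 w
  have hcontrast : √2 * ((star u ⬝ᵥ M 0 *ᵥ u).re - (star w ⬝ᵥ M 0 *ᵥ w).re) ≤ √2 :=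
    mul_le_of_le_one_right (sqrt_nonneg 2) (by linarith)
  rw [hsuccess, cos_sq_pi_div_eight]
  linarith
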